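/- arXiv:2207.12877 — 3 statements merged into one kernel-verified Lean document; each statement's English description precedes it below -/
import Mathlib

section
/- The softmax function from ℝ^κ to ℝ^κ, mapping u to (e^{u_i} / Σ_j e^{u_j})_{i∈[κ]}, is 1-Lipschitz with respect to the ℓ₂ norm. -/
open Finset ContinuousLinearMap

namespace SoftmaxAux

variable {κ : ℕ}

/-- Key algebraic inequality: if `p` is a probability vector then
`∑ i, (p i * (v i - m))^2 ≤ ∑ i, (v i)^2` where `m = ∑ j, p j * v j`. -/
lemma key_ineq (p v : Fin κ → ℝ) (hp : ∀ i, 0 ≤ p i) (hs : ∑ i, p i = 1) :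
    ∑ i, (p i * (v i - ∑ j, p j * v j)) ^ 2 ≤ ∑ i, v i ^ 2 := by
  set m : ℝ := ∑ j, p j * v j with hm
  have hple : ∀ i, p i ≤ 1 := by
    intro i
    calc p i ≤ ∑ j, p j := Finset.single_le_sum (fun j _ => hp j) (Finset.mem_univ i)
    _ = 1 := hs
  have step1 : ∑ i, (p i * (v i - m)) ^ 2 ≤ ∑ i, p i * (v i - m) ^ 2 := by
    apply Finset.sum_le_sum
    intro i _
    rw [mul_pow]
    apply mul_le_mul_of_nonneg_right _ (sq_nonneg _)
    calc p i ^ 2 = p i * p i := sq (p i)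
    _ ≤ 1 * p i := mul_le_mul_of_nonneg_right (hple i) (hp i)
    _ = p i := one_mul _
  have step2 : ∑ i, p i * (v i - m) ^ 2 = (∑ i, p i * v i ^ 2) - m ^ 2 := by
    have expand : ∀ i ∈ Finset.univ, p i * (v i - m) ^ 2
        = p i * v i ^ 2 - 2 * m * (p i * v i) + m ^ 2 * p i := by
      intro i _; ring
    rw [Finset.sum_congr rfl expand, Finset.sum_add_distrib, Finset.sum_sub_distrib,
      ← Finset.mul_sum, ← Finset.mul_sum, hs, ← hm]
    ring
  have step3 : (∑ i, p i * v i ^ 2) ≤ ∑ i, v i ^ 2 := by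
    apply Finset.sum_le_sum
    intro i _
    calc p i * v i ^ 2 ≤ 1 * v i ^ 2 :=
      mul_le_mul_of_nonneg_right (hple i) (sq_nonneg _)
    _ = v i ^ 2 := one_mul _
  calc ∑ i, (p i * (v i - m)) ^ 2 ≤ ∑ i, p i * (v i - m) ^ 2 := step1
  _ = (∑ i, p i * v i ^ 2) - m ^ 2 := step2
  _ ≤ ∑ i, p i * v i ^ 2 := sub_le_self _ (sq_nonneg m)
  _ ≤ ∑ i, v i ^ 2 := step3

/-- softmax on the plain pi type. -/
noncomputable def g (κ : ℕ) : (Fin κ → ℝ) → (Fin κ → ℝ) :=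
  fun w i => Real.exp (w i) / ∑ j, Real.exp (w j)

/-- The derivative of softmax (as a map on the plain pi type) at `u`. -/
noncomputable def Lg (u : Fin κ → ℝ) : (Fin κ → ℝ) →L[ℝ] (Fin κ → ℝ) :=
  ContinuousLinearMap.pi fun i =>
    (Real.exp (u i) / ∑ j, Real.exp (u j)) •
      (ContinuousLinearMap.proj i
        - ∑ j, (Real.exp (u j) / ∑ k, Real.exp (u k)) • ContinuousLinearMap.proj j)

lemma Lg_apply (u v : Fin κ → ℝ) (i : Fin κ) :
    Lg u v i = (Real.exp (u i) / ∑ j, Real.exp (u j)) *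
      (v i - ∑ j, (Real.exp (u j) / ∑ k, Real.exp (u k)) * v j) := by
  simp [Lg, ContinuousLinearMap.sum_apply]

lemma S_pos (hκ : 0 < κ) (u : Fin κ → ℝ) : 0 < ∑ j, Real.exp (u j) :=
  Finset.sum_pos (fun j _ => Real.exp_pos _) (by simpa [Finset.univ_nonempty_iff] using
    (Fin.pos_iff_nonempty.mp hκ))

lemma hasFDerivAt_g (hκ : 0 < κ) (u : Fin κ → ℝ) :
    HasFDerivAt (g κ) (Lg u) u := by
  have hS : 0 < ∑ j, Real.exp (u j) := S_pos hκ u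
  apply hasFDerivAt_pi''
  intro i
  have hexp : ∀ i : Fin κ, HasFDerivAt (fun w : Fin κ → ℝ => Real.exp (w i))
      (Real.exp (u i) • (ContinuousLinearMap.proj i : (Fin κ → ℝ) →L[ℝ] ℝ)) u := by
    intro i
    have hproj : HasFDerivAt (fun w : Fin κ → ℝ => w i)
        (ContinuousLinearMap.proj i : (Fin κ → ℝ) →L[ℝ] ℝ) u :=
      hasFDerivAt_apply (𝕜 := ℝ) (F' := fun _ : Fin κ => ℝ) i u
    exact (Real.hasDerivAt_exp (u i)).comp_hasFDerivAt u hproj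
  have hsum : HasFDerivAt (fun w : Fin κ → ℝ => ∑ j, Real.exp (w j))
      (∑ j, Real.exp (u j) • (ContinuousLinearMap.proj j : (Fin κ → ℝ) →L[ℝ] ℝ)) u :=
    HasFDerivAt.fun_sum fun j _ => hexp j
  have hinv : HasFDerivAt (fun w : Fin κ → ℝ => (∑ j, Real.exp (w j))⁻¹)
      ((-((∑ j, Real.exp (u j)) ^ 2)⁻¹) •
        (∑ j, Real.exp (u j) • (ContinuousLinearMap.proj j : (Fin κ → ℝ) →L[ℝ] ℝ))) u :=
    (hasDerivAt_inv hS.ne').comp_hasFDerivAt u hsum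
  have hmul := (hexp i).fun_mul hinv
  have hfun : (fun x : Fin κ → ℝ => g κ x i)
      = fun w : Fin κ → ℝ => Real.exp (w i) * (∑ j, Real.exp (w j))⁻¹ := by
    funext w; simp [g, div_eq_mul_inv]
  rw [hfun]
  refine hmul.congr_fderiv ?_
  ext v
  simp only [ContinuousLinearMap.coe_comp', Function.comp_apply,
    ContinuousLinearMap.proj_apply, ContinuousLinearMap.add_apply,
    ContinuousLinearMap.smul_apply, ContinuousLinearMap.neg_apply,
    ContinuousLinearMap.sum_apply, Pi.smul_apply, smul_eq_mul]
  rw [Lg_apply]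
  have hsum_eq : ∑ j, (Real.exp (u j) / ∑ k, Real.exp (u k)) * v j
      = (∑ j, Real.exp (u j) * v j) / ∑ k, Real.exp (u k) := by
    rw [Finset.sum_div]
    exact Finset.sum_congr rfl fun j _ => by ring
  rw [hsum_eq]
  field_simp
  ring

/-- softmax on Euclidean space. -/
noncomputable def sm (κ : ℕ) : EuclideanSpace ℝ (Fin κ) → EuclideanSpace ℝ (Fin κ) :=
  fun u => (EuclideanSpace.equiv (Fin κ) ℝ).symm (g κ (EuclideanSpace.equiv (Fin κ) ℝ u))

/-- The derivative of softmax on Euclidean space. -/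
noncomputable def Lf (κ : ℕ) (u : EuclideanSpace ℝ (Fin κ)) :
    EuclideanSpace ℝ (Fin κ) →L[ℝ] EuclideanSpace ℝ (Fin κ) :=
  (EuclideanSpace.equiv (Fin κ) ℝ).symm.toContinuousLinearMap.comp
    ((Lg (EuclideanSpace.equiv (Fin κ) ℝ u)).comp
      (EuclideanSpace.equiv (Fin κ) ℝ).toContinuousLinearMap)

lemma hasFDerivAt_sm (hκ : 0 < κ) (u : EuclideanSpace ℝ (Fin κ)) :
    HasFDerivAt (sm κ) (Lf κ u) u := by
  set e := EuclideanSpace.equiv (Fin κ) ℝ with he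
  have h1 : HasFDerivAt (g κ ∘ e) ((Lg (e u)).comp e.toContinuousLinearMap) u :=
    (hasFDerivAt_g hκ (e u)).comp u e.toContinuousLinearMap.hasFDerivAt
  have h2 : HasFDerivAt ((e.symm : (Fin κ → ℝ) → EuclideanSpace ℝ (Fin κ)) ∘ (g κ ∘ e))
      (e.symm.toContinuousLinearMap.comp ((Lg (e u)).comp e.toContinuousLinearMap)) u :=
    e.symm.toContinuousLinearMap.hasFDerivAt.comp u h1
  exact h2

lemma Lf_nnnorm_le (hκ : 0 < κ) (u : EuclideanSpace ℝ (Fin κ)) : ‖Lf κ u‖₊ ≤ 1 := by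
  set e := EuclideanSpace.equiv (Fin κ) ℝ with he
  apply ContinuousLinearMap.opNNNorm_le_bound
  intro v
  rw [← NNReal.coe_le_coe]
  push_cast
  rw [one_mul]
  rw [EuclideanSpace.norm_eq (Lf κ u v), EuclideanSpace.norm_eq v]
  apply Real.sqrt_le_sqrt
  have happ : ∀ i, (Lf κ u v) i
      = (Real.exp ((e u) i) / ∑ j, Real.exp ((e u) j)) *
        ((e v) i - ∑ j, (Real.exp ((e u) j) / ∑ k, Real.exp ((e u) k)) * (e v) j) :=
    fun i => Lg_apply (e u) (e v) i
  calc ∑ i, ‖(Lf κ u v) i‖ ^ 2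
      = ∑ i, ((Real.exp ((e u) i) / ∑ j, Real.exp ((e u) j)) *
        ((e v) i - ∑ j, (Real.exp ((e u) j) / ∑ k, Real.exp ((e u) k)) * (e v) j)) ^ 2 := by
        apply Finset.sum_congr rfl; intro i _; rw [happ i, Real.norm_eq_abs, sq_abs]
    _ ≤ ∑ i, ((e v) i) ^ 2 := by
        apply key_ineq
        · intro i
          exact div_nonneg (Real.exp_pos _).le (S_pos hκ (e u)).le
        · rw [← Finset.sum_div]
          exact div_self (S_pos hκ (e u)).ne'
    _ = ∑ i, ‖v i‖ ^ 2 := by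
        apply Finset.sum_congr rfl; intro i _; rw [Real.norm_eq_abs, sq_abs]; rfl

end SoftmaxAux

/-- The softmax function from ℝ^κ to ℝ^κ is 1-Lipschitz w.r.t. the ℓ₂ norm. -/
theorem softmax_lipschitz (κ : ℕ) (hκ : 0 < κ) :
    LipschitzWith 1 (fun u : EuclideanSpace ℝ (Fin κ) =>
      (WithLp.toLp 2 (fun i => Real.exp (u i) / ∑ j, Real.exp (u j)) : EuclideanSpace ℝ (Fin κ))) := by
  have key : LipschitzWith 1 (SoftmaxAux.sm κ) := by
    apply lipschitzWith_of_nnnorm_fderiv_le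
      (fun u => (SoftmaxAux.hasFDerivAt_sm hκ u).differentiableAt)
    intro u
    rw [(SoftmaxAux.hasFDerivAt_sm hκ u).fderiv]
    exact SoftmaxAux.Lf_nnnorm_le hκ u
  exact key
end

section
/- Contraction lemma for Rademacher complexity: if φ_1, …, φ_m : ℝ → ℝ are each ρ-Lipschitz, and for a ∈ ℝ^m we write φ(a) = (φ_1(a_1), …, φ_m(a_m)), then R(φ ∘ A) ≤ ρ·R(A) for any bounded set A ⊆ ℝ^m. -/
/-!
Replace the maps `φ i` by `x ↦ ρ * x` one coordinate at a time; more generally, the Rademacher sum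
of `u '' A` is at most that of `v '' A` whenever every coordinate of `u` varies on `A` by no more
than the same coordinate of `v`. For a single coordinate `j`, pair each sign pattern `σ` with the
one flipping `σ j`: the sum of the two suprema is the supremum over pairs `(a, b)` of
`± (u a j - u b j) + G a + G b`, where `G` collects the other coordinates. As the pair may be
swapped, this is the supremum of `|u a j - u b j| + G a + G b`, which can only grow when `u j` is
replaced by `v j`.
-/

open Finset Bornology Pointwise

/-- Rademacher complexity of a set of vectors in ℝ^m. -/
noncomputable def radComplexity (m : ℕ) (A : Set (Fin m → ℝ)) : ℝ :=
  ((m : ℝ))⁻¹ * ((2 : ℝ) ^ m)⁻¹ * ∑ σ : Fin m → Bool,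
    sSup ((fun a : Fin m → ℝ => ∑ i, (if σ i then (1 : ℝ) else -1) * a i) '' A)

theorem Fintype.sum_le_sum_of_involutive {β : Type*} [Fintype β] {e : β → β}
    (he : Function.Involutive e) {f g : β → ℝ} (hfg : ∀ x, f x + f (e x) ≤ g x + g (e x)) :
    ∑ x, f x ≤ ∑ x, g x := by
  have hpair : ∑ x, (f x + f (e x)) ≤ ∑ x, (g x + g (e x)) := sum_le_sum fun x _ => hfg x
  rw [sum_add_distrib, sum_add_distrib, he.bijective.sum_comp f, he.bijective.sum_comp g] at hpair
  linarith

theorem csSup_add_csSup_neg_le_of_abs_sub_le {α : Type*} {A : Set α} (hA : A.Nonempty)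
    {F F' G : α → ℝ} (hpos : BddAbove ((fun a => F' a + G a) '' A))
    (hneg : BddAbove ((fun a => -F' a + G a) '' A))
    (hF : ∀ a ∈ A, ∀ b ∈ A, |F a - F b| ≤ |F' a - F' b|) :
    sSup ((fun a => F a + G a) '' A) + sSup ((fun a => -F a + G a) '' A) ≤
      sSup ((fun a => F' a + G a) '' A) + sSup ((fun a => -F' a + G a) '' A) := by
  have hpair : ∀ a ∈ A, ∀ b ∈ A, (F a + G a) + (-F b + G b) ≤
      sSup ((fun a => F' a + G a) '' A) + sSup ((fun a => -F' a + G a) '' A) := by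
    intro a ha b hb
    have hab := (le_abs_self _).trans (hF a ha b hb)
    have hpa := le_csSup hpos ⟨a, ha, rfl⟩
    have hpb := le_csSup hpos ⟨b, hb, rfl⟩
    have hna := le_csSup hneg ⟨a, ha, rfl⟩
    have hnb := le_csSup hneg ⟨b, hb, rfl⟩
    simp only at hpa hpb hna hnb
    cases abs_cases (F' a - F' b) <;> linarith
  rw [← le_sub_iff_add_le]
  refine csSup_le (hA.image _) ?_
  rintro _ ⟨a, ha, rfl⟩
  rw [le_sub_comm]
  refine csSup_le (hA.image _) ?_
  rintro _ ⟨b, hb, rfl⟩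
  linarith [hpair a ha b hb]

theorem bddAbove_image_linear_of_isBounded {m : ℕ} {S : Set (Fin m → ℝ)} (hS : IsBounded S)
    (c : Fin m → ℝ) : BddAbove ((fun a => ∑ i, c i * a i) '' S) :=
  ((hS.isCompact_closure.image (by fun_prop)).bddAbove).mono (Set.image_mono subset_closure)

theorem isBounded_image_of_abs_sub_le {α : Type*} {m : ℕ} {A : Set α} {u v : α → Fin m → ℝ}
    (hv : IsBounded (v '' A)) (huv : ∀ i, ∀ a ∈ A, ∀ b ∈ A, |u a i - u b i| ≤ |v a i - v b i|) :
    IsBounded (u '' A) := by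
  obtain ⟨C, hC⟩ := Metric.isBounded_iff.mp hv
  refine Metric.isBounded_iff.mpr ⟨C, ?_⟩
  rintro _ ⟨a, ha, rfl⟩ _ ⟨b, hb, rfl⟩
  have hvab := hC ⟨a, ha, rfl⟩ ⟨b, hb, rfl⟩
  refine (dist_pi_le_iff (dist_nonneg.trans hvab)).mpr fun i => ?_
  calc dist (u a i) (u b i) ≤ dist (v a i) (v b i) := by
        simpa only [Real.dist_eq] using huv i a ha b hb
    _ ≤ C := (dist_le_pi_dist _ _ i).trans hvab

def boolSign (b : Bool) : ℝ := if b then 1 else -1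

theorem abs_boolSign (b : Bool) : |boolSign b| = 1 := by
  cases b <;> simp [boolSign]

theorem boolSign_not (b : Bool) : boolSign (!b) = -boolSign b := by
  cases b <;> simp [boolSign]

noncomputable def rademacherSum (m : ℕ) (S : Set (Fin m → ℝ)) : ℝ :=
  ∑ σ : Fin m → Bool, sSup ((fun a => ∑ i, boolSign (σ i) * a i) '' S)

theorem radComplexity_eq_rademacherSum (m : ℕ) (A : Set (Fin m → ℝ)) :
    radComplexity m A = ((m : ℝ))⁻¹ * ((2 : ℝ) ^ m)⁻¹ * rademacherSum m A :=
  rfl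

theorem rademacherSum_smul {m : ℕ} (S : Set (Fin m → ℝ)) {ρ : ℝ} (hρ : 0 ≤ ρ) :
    rademacherSum m (ρ • S) = ρ * rademacherSum m S := by
  rw [rademacherSum, rademacherSum, mul_sum]
  refine sum_congr rfl fun σ _ => ?_
  have hlin : (fun a => ∑ i, boolSign (σ i) * a i) '' (ρ • S) =
      ρ • (fun a => ∑ i, boolSign (σ i) * a i) '' S := by
    simp only [← Set.image_smul, Set.image_image, Pi.smul_apply, smul_eq_mul, mul_sum]
    congr 1
    funext a
    exact sum_congr rfl fun i _ => mul_left_comm _ _ _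
  rw [hlin, Real.sSup_smul_of_nonneg hρ, smul_eq_mul]

section Comparison

variable {α : Type*} {m : ℕ} {A : Set α}

theorem rademacherSum_image_le_of_eq_off (hA : A.Nonempty) {u v : α → Fin m → ℝ} (j : Fin m)
    (hv : IsBounded (v '' A)) (heq : ∀ a, ∀ i ≠ j, u a i = v a i)
    (hj : ∀ a ∈ A, ∀ b ∈ A, |u a j - u b j| ≤ |v a j - v b j|) :
    rademacherSum m (u '' A) ≤ rademacherSum m (v '' A) := by
  let flip : (Fin m → Bool) → Fin m → Bool := fun σ => Function.update σ j (!σ j)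
  have hflip : Function.Involutive flip := fun σ => by simp [flip]
  refine Fintype.sum_le_sum_of_involutive hflip fun σ => ?_
  simp only [Set.image_image]
  let G : α → ℝ := fun a => ∑ i ∈ univ.erase j, boolSign (σ i) * v a i
  have hsplit : ∀ (τ : Fin m → Bool) (w : α → Fin m → ℝ), (∀ i ≠ j, τ i = σ i) →
      (∀ a, ∀ i ≠ j, w a i = v a i) →
      (fun a => ∑ i, boolSign (τ i) * w a i) = fun a => boolSign (τ j) * w a j + G a := by
    intro τ w hτ hw
    funext a
    rw [← add_sum_erase _ _ (mem_univ j)]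
    congr 1
    refine sum_congr rfl fun i hi => ?_
    rw [hτ i (ne_of_mem_erase hi), hw a i (ne_of_mem_erase hi)]
  have hflip_ne : ∀ i ≠ j, flip σ i = σ i := fun i hi => Function.update_of_ne hi _ _
  have hflip_j : boolSign (flip σ j) = -boolSign (σ j) := by
    simp only [flip, Function.update_self, boolSign_not]
  have hbdd : ∀ τ : Fin m → Bool, BddAbove ((fun a => ∑ i, boolSign (τ i) * v a i) '' A) := fun τ => by
    simpa only [Set.image_image] using bddAbove_image_linear_of_isBounded hv fun i => boolSign (τ i)
  have hpos := hbdd σ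
  have hneg := hbdd (flip σ)
  rw [hsplit σ v (fun _ _ => rfl) (fun _ _ _ => rfl)] at hpos
  rw [hsplit (flip σ) v hflip_ne (fun _ _ _ => rfl), hflip_j] at hneg
  rw [hsplit σ u (fun _ _ => rfl) heq, hsplit σ v (fun _ _ => rfl) (fun _ _ _ => rfl),
    hsplit (flip σ) u hflip_ne heq, hsplit (flip σ) v hflip_ne (fun _ _ _ => rfl), hflip_j]
  simp only [neg_mul] at hneg ⊢
  refine csSup_add_csSup_neg_le_of_abs_sub_le hA hpos hneg fun a ha b hb => ?_
  · rw [← mul_sub, ← mul_sub, abs_mul, abs_mul, abs_boolSign, one_mul, one_mul]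
    exact hj a ha b hb

theorem rademacherSum_image_le_of_abs_sub_le (hA : A.Nonempty) {u v : α → Fin m → ℝ}
    (hv : IsBounded (v '' A)) (huv : ∀ i, ∀ a ∈ A, ∀ b ∈ A, |u a i - u b i| ≤ |v a i - v b i|) :
    rademacherSum m (u '' A) ≤ rademacherSum m (v '' A) := by
  classical
  let hybrid : Finset (Fin m) → α → Fin m → ℝ := fun s a i => if i ∈ s then v a i else u a i
  have hhybrid : ∀ s i, ∀ a ∈ A, ∀ b ∈ A, |hybrid s a i - hybrid s b i| ≤ |v a i - v b i| := by
    intro s i a ha b hb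
    by_cases hi : i ∈ s <;> simp [hybrid, hi, huv i a ha b hb]
  have hstep : ∀ s, rademacherSum m (u '' A) ≤ rademacherSum m (hybrid s '' A) := by
    intro s
    induction s using Finset.induction_on with
    | empty => simp [hybrid]
    | insert j s hj ih =>
      refine ih.trans (rademacherSum_image_le_of_eq_off hA j
        (isBounded_image_of_abs_sub_le hv (hhybrid _)) (fun a i hi => ?_) fun a ha b hb => ?_)
      · simp [hybrid, hi]
      · simpa [hybrid, hj] using huv j a ha b hb
  simpa [hybrid] using hstep univ

end Comparison

/-- Contraction lemma: composing coordinatewise with ρ-Lipschitz maps multiplies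
the Rademacher complexity by at most ρ. -/
theorem radComplexity_contraction (m : ℕ) (A : Set (Fin m → ℝ))
    (hA : Bornology.IsBounded A) (hne : A.Nonempty) (ρ : ℝ) (hρ : 0 ≤ ρ)
    (φ : Fin m → ℝ → ℝ) (hφ : ∀ i a b, |φ i a - φ i b| ≤ ρ * |a - b|) :
    radComplexity m ((fun a i => φ i (a i)) '' A) ≤ ρ * radComplexity m A := by
  have hdom : ∀ i, ∀ a ∈ A, ∀ b ∈ A,
      |φ i (a i) - φ i (b i)| ≤ |(ρ • a) i - (ρ • b) i| := by
    intro i a _ b _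
    rw [Pi.smul_apply, Pi.smul_apply, smul_eq_mul, smul_eq_mul, ← mul_sub, abs_mul,
      abs_of_nonneg hρ]
    exact hφ i (a i) (b i)
  have hscaled : IsBounded ((fun a => ρ • a) '' A) := by
    rw [Set.image_smul]
    exact hA.smul₀ ρ
  have hcompare := rademacherSum_image_le_of_abs_sub_le hne hscaled hdom
  rw [Set.image_smul, rademacherSum_smul A hρ] at hcompare
  rw [radComplexity_eq_rademacherSum, radComplexity_eq_rademacherSum, mul_left_comm ρ]
  exact mul_le_mul_of_nonneg_left hcompare (by positivity)
end

section
/- For independent standard Gumbel random variables δ_1, …, δ_n and real numbers u_1, …, u_n with all ties occurring with probability zero, the probability that u_i + δ_i > u_j + δ_j for all j ≠ i equals the softmax probability exp(u_i)/Σ_{j=1}^n exp(u_j). -/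
open MeasureTheory ProbabilityTheory Real Set Filter Topology

/-- antiderivative fact -/
lemma gumbel_hasDerivAt (S x : ℝ) (hS : S ≠ 0) :
    HasDerivAt (fun t => Real.exp (-(S * Real.exp (-t))) / S)
      (Real.exp (-x) * Real.exp (-(S * Real.exp (-x)))) x := by
  have h1 : HasDerivAt (fun t : ℝ => -t) (-1) x := (hasDerivAt_id x).neg
  have h2 : HasDerivAt (fun t : ℝ => Real.exp (-t)) (Real.exp (-x) * (-1)) x :=
    (Real.hasDerivAt_exp (-x)).comp x h1
  have h3 : HasDerivAt (fun t : ℝ => -(S * Real.exp (-t))) (-(S * (Real.exp (-x) * (-1)))) x :=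
    ((h2.const_mul S).neg)
  have h4 : HasDerivAt (fun t : ℝ => Real.exp (-(S * Real.exp (-t))))
      (Real.exp (-(S * Real.exp (-x))) * (-(S * (Real.exp (-x) * (-1))))) x :=
    (Real.hasDerivAt_exp _).comp x h3
  have := h4.div_const S
  convert this using 1
  · rfl
  · rfl
  rw [eq_div_iff hS]
  ring

lemma gumbel_tendsto_atBot (S : ℝ) (hS : 0 < S) :
    Tendsto (fun t => Real.exp (-(S * Real.exp (-t))) / S) atBot (𝓝 0) := by
  have h1 : Tendsto (fun t : ℝ => -(S * Real.exp (-t))) atBot atBot := by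
    apply Filter.tendsto_neg_atBot_iff.mpr
    exact (Real.tendsto_exp_atTop.comp tendsto_neg_atBot_atTop).const_mul_atTop hS
  have h2 := Real.tendsto_exp_atBot.comp h1
  simpa using h2.div_const S

lemma gumbel_tendsto_atTop (S : ℝ) (hS : 0 < S) :
    Tendsto (fun t => Real.exp (-(S * Real.exp (-t))) / S) atTop (𝓝 (1 / S)) := by
  have h1 : Tendsto (fun t : ℝ => -(S * Real.exp (-t))) atTop (𝓝 0) := by
    have := (Real.tendsto_exp_atBot.comp tendsto_neg_atTop_atBot).const_mul S
    simpa using this.neg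
  have h2 := (Real.continuous_exp.tendsto 0).comp h1
  simpa using h2.div_const S

lemma gumbel_integrable (S : ℝ) (hS : 0 < S) :
    Integrable (fun x => Real.exp (-x) * Real.exp (-(S * Real.exp (-x)))) := by
  have hpos : ∀ x : ℝ, 0 ≤ Real.exp (-x) * Real.exp (-(S * Real.exp (-x))) :=
    fun x => le_of_lt (by positivity)
  have hIoi : IntegrableOn (fun x => Real.exp (-x) * Real.exp (-(S * Real.exp (-x)))) (Set.Ioi 0) :=
    integrableOn_Ioi_deriv_of_nonneg' (g := fun t => Real.exp (-(S * Real.exp (-t))) / S)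
      (fun x _ => gumbel_hasDerivAt S x hS.ne') (fun x _ => hpos x)
      (gumbel_tendsto_atTop S hS)
  have hIic : IntegrableOn (fun x => Real.exp (-x) * Real.exp (-(S * Real.exp (-x)))) (Set.Iic 0) := by
    have hderiv' : ∀ x : ℝ, HasDerivAt (fun t => -(Real.exp (-(S * Real.exp (t))) / S))
        (Real.exp x * Real.exp (-(S * Real.exp x))) x := by
      intro x
      have h1 : HasDerivAt (fun t : ℝ => -(S * Real.exp t)) (-(S * Real.exp x)) x :=
        ((Real.hasDerivAt_exp x).const_mul S).neg
      have h4 := ((Real.hasDerivAt_exp _).comp x h1).div_const S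
      have h5 := h4.neg
      convert h5 using 1
      · rfl
      · rfl
      · ext t; simp
      rw [eq_comm, neg_eq_iff_eq_neg, div_eq_iff hS.ne']
      ring
    have hgpos : ∀ x : ℝ, 0 ≤ Real.exp x * Real.exp (-(S * Real.exp x)) :=
      fun x => le_of_lt (by positivity)
    have htop : Tendsto (fun t : ℝ => -(Real.exp (-(S * Real.exp (t))) / S)) atTop (𝓝 0) := by
      have h := ((gumbel_tendsto_atBot S hS).comp tendsto_neg_atTop_atBot).neg
      rw [neg_zero] at h
      refine h.congr (fun t => ?_)
      simp [Function.comp]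
    have hgInt : IntegrableOn (fun x : ℝ => Real.exp x * Real.exp (-(S * Real.exp x))) (Set.Ioi 0) :=
      integrableOn_Ioi_deriv_of_nonneg' (fun x _ => hderiv' x) (fun x _ => hgpos x) htop
    have h2 : IntegrableOn (fun x : ℝ => Real.exp (-x) * Real.exp (-(S * Real.exp (-x)))) (Set.Iio 0) := by
      have hmp := (Measure.measurePreserving_neg (volume : Measure ℝ))
      have h3 := (hmp.integrableOn_comp_preimage (Homeomorph.neg ℝ).measurableEmbedding).2 hgInt
      have hset : (Neg.neg : ℝ → ℝ) ⁻¹' Set.Ioi (0:ℝ) = Set.Iio 0 := by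
        ext x; simp
      rw [hset] at h3
      refine h3.congr_fun (fun x _ => ?_) measurableSet_Iio
      simp [Function.comp]
    exact h2.congr_set_ae (MeasureTheory.Iio_ae_eq_Iic).symm
  have := hIic.union hIoi
  rwa [Set.Iic_union_Ioi, integrableOn_univ] at this

lemma gumbel_integral (S : ℝ) (hS : 0 < S) :
    ∫ x, Real.exp (-x) * Real.exp (-(S * Real.exp (-x))) = 1 / S := by
  have := integral_of_hasDerivAt_of_tendsto (f := fun t => Real.exp (-(S * Real.exp (-t))) / S)
    (fun x => gumbel_hasDerivAt S x hS.ne') (gumbel_integrable S hS)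
    (gumbel_tendsto_atBot S hS) (gumbel_tendsto_atTop S hS)
  simpa using this

noncomputable def gumbelPDF (x : ℝ) : ℝ := Real.exp (-x) * Real.exp (-Real.exp (-x))

lemma gumbelPDF_continuous : Continuous gumbelPDF := by
  unfold gumbelPDF; fun_prop

lemma gumbelPDF_nonneg (x : ℝ) : 0 ≤ gumbelPDF x := by
  unfold gumbelPDF; positivity

lemma gumbelPDF_eq (x : ℝ) : gumbelPDF x = Real.exp (-x) * Real.exp (-(1 * Real.exp (-x))) := by
  simp [gumbelPDF]

noncomputable def gumbelMeasure : Measure ℝ :=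
  volume.withDensity (fun x => ENNReal.ofReal (gumbelPDF x))

lemma gumbelPDF_integrable : Integrable gumbelPDF := by
  have := gumbel_integrable 1 one_pos
  unfold gumbelPDF
  simpa using this

lemma gumbel_cdf (x : ℝ) :
    gumbelMeasure (Set.Iic x) = ENNReal.ofReal (Real.exp (-Real.exp (-x))) := by
  rw [gumbelMeasure, withDensity_apply _ measurableSet_Iic]
  rw [← ofReal_integral_eq_lintegral_ofReal (gumbelPDF_integrable.integrableOn)
    (Filter.Eventually.of_forall (fun t => gumbelPDF_nonneg t))]
  congr 1
  have hFTC := integral_Iic_of_hasDerivAt_of_tendsto'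
    (f := fun t => Real.exp (-(1 * Real.exp (-t))) / 1)
    (a := x) (m := 0)
    (fun t _ => gumbel_hasDerivAt 1 t one_ne_zero)
    ((gumbel_integrable 1 one_pos).integrableOn)
    (gumbel_tendsto_atBot 1 one_pos)
  have : ∫ t in Set.Iic x, gumbelPDF t
      = ∫ t in Set.Iic x, Real.exp (-t) * Real.exp (-(1 * Real.exp (-t))) := by
    refine setIntegral_congr_fun measurableSet_Iic (fun t _ => gumbelPDF_eq t)
  rw [this, hFTC]
  simp

instance : IsProbabilityMeasure gumbelMeasure := by
  constructor
  rw [gumbelMeasure, withDensity_apply _ MeasurableSet.univ, Measure.restrict_univ]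
  rw [← ofReal_integral_eq_lintegral_ofReal gumbelPDF_integrable
    (Filter.Eventually.of_forall (fun t => gumbelPDF_nonneg t))]
  have : ∫ t, gumbelPDF t = ∫ t, Real.exp (-t) * Real.exp (-(1 * Real.exp (-t))) := by
    exact integral_congr_ae (Filter.Eventually.of_forall (fun t => gumbelPDF_eq t))
  rw [this, gumbel_integral 1 one_pos]
  norm_num

lemma gumbel_cdf_Iio (x : ℝ) :
    gumbelMeasure (Set.Iio x) = ENNReal.ofReal (Real.exp (-Real.exp (-x))) := by
  rw [← gumbel_cdf x]
  refine measure_congr (MeasureTheory.Iio_ae_eq_Iic' ?_)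
  exact (withDensity_absolutelyContinuous volume _) (measure_singleton x)

lemma gumbelMeasure_eq :
    gumbelMeasure = volume.withDensity (fun x => ENNReal.ofReal (gumbelPDF x)) := rfl

/-- For i.i.d. standard Gumbel noise, the probability that alternative i has the
strictly largest perturbed utility equals the softmax (multinomial logit) probability. -/
theorem gumbel_argmax_softmax {Ω : Type*} [MeasurableSpace Ω] (μ : Measure Ω)
    [IsProbabilityMeasure μ] (n : ℕ) (hn : 0 < n) (u : Fin n → ℝ)
    (δ : Fin n → Ω → ℝ) (hmeas : ∀ i, Measurable (δ i))
    (hindep : iIndepFun δ μ)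
    (hg : ∀ i, ∀ x : ℝ, μ {ω | δ i ω ≤ x} = ENNReal.ofReal (Real.exp (-Real.exp (-x))))
    (i : Fin n) :
    (μ {ω | ∀ j, j ≠ i → u j + δ j ω < u i + δ i ω}).toReal
      = Real.exp (u i) / ∑ j, Real.exp (u j) := by
  classical
  -- marginal laws
  have hlaw : ∀ j, μ.map (δ j) = gumbelMeasure := by
    intro j
    have hpm : IsProbabilityMeasure (μ.map (δ j)) :=
      Measure.isProbabilityMeasure_map (hmeas j).aemeasurable
    refine Measure.ext_of_Iic (μ.map (δ j)) gumbelMeasure (fun a => ?_)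
    rw [Measure.map_apply (hmeas j) measurableSet_Iic, gumbel_cdf]
    exact hg j a
  -- joint law
  set g : Ω → (Fin n → ℝ) := fun ω j => δ j ω with hgdef
  have hgmeas : Measurable g := measurable_pi_lambda _ (fun j => hmeas j)
  have hjoint : μ.map g = Measure.pi (fun _ : Fin n => gumbelMeasure) := by
    refine (Measure.pi_eq (fun s hs => ?_)).symm
    rw [Measure.map_apply hgmeas (MeasurableSet.univ_pi hs)]
    have hpre : g ⁻¹' (Set.univ.pi s) = ⋂ j ∈ Finset.univ, δ j ⁻¹' s j := by
      ext ω; simp [g, Set.mem_pi]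
    rw [hpre, hindep.measure_inter_preimage_eq_mul Finset.univ (fun j _ => hs j)]
    refine Finset.prod_congr rfl (fun j _ => ?_)
    rw [← hlaw j, Measure.map_apply (hmeas j) (hs j)]
  -- the event
  set T : Set (Fin n → ℝ) := {x | ∀ j, j ≠ i → u j + x j < u i + x i} with hTdef
  have hTmeas : MeasurableSet T := by
    have hT2 : T = ⋂ j, {x : Fin n → ℝ | j ≠ i → u j + x j < u i + x i} := by
      ext x; simp [hTdef]
    rw [hT2]
    refine MeasurableSet.iInter (fun j => ?_)
    by_cases h : j = i
    · simp [h]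
    · have : {x : Fin n → ℝ | j ≠ i → u j + x j < u i + x i}
          = {x : Fin n → ℝ | u j + x j < u i + x i} := by ext x; simp [h]
      rw [this]
      exact measurableSet_lt (by fun_prop) (by fun_prop)
  have hev : {ω | ∀ j, j ≠ i → u j + δ j ω < u i + δ i ω} = g ⁻¹' T := rfl
  rw [hev, ← Measure.map_apply hgmeas hTmeas, hjoint]
  -- split off coordinate i
  set p : Fin n → Prop := fun j => j = i with hpdef
  have hmp := MeasureTheory.measurePreserving_piEquivPiSubtypeProd
    (fun _ : Fin n => gumbelMeasure) p
  set e := MeasurableEquiv.piEquivPiSubtypeProd (fun _ : Fin n => ℝ) p with hedef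
  have hTm2 : MeasurableSet (e.symm ⁻¹' T) := e.symm.measurable hTmeas
  have hsplit := hmp.measure_preimage (s := e.symm ⁻¹' T) hTm2.nullMeasurableSet
  have hTe : e ⁻¹' (e.symm ⁻¹' T) = T := by
    rw [← Set.preimage_comp]; simp
  rw [hTe] at hsplit
  rw [hsplit, Measure.prod_apply hTm2]
  beta_reduce
  -- constants
  set c : ℝ := ∑ jp : {j // ¬ p j}, Real.exp (u jp.1 - u i) with hcdef
  have hc0 : 0 ≤ c := Finset.sum_nonneg (fun _ _ => (Real.exp_pos _).le)
  set S : ℝ := c + 1 with hSdef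
  have hSpos : 0 < S := by positivity
  -- slices
  have hslice : ∀ a : {j // p j} → ℝ,
      (Measure.pi fun _ : {j // ¬ p j} => gumbelMeasure) (Prod.mk a ⁻¹' (e.symm ⁻¹' T))
        = ENNReal.ofReal (Real.exp (-(c * Real.exp (-(a ⟨i, rfl⟩))))) := by
    intro a
    have hset : (Prod.mk a ⁻¹' (e.symm ⁻¹' T))
        = Set.univ.pi (fun jp : {j // ¬ p j} => Set.Iio (u i + a ⟨i, rfl⟩ - u jp.1)) := by
      ext b
      simp only [Set.mem_preimage, hTdef, Set.mem_setOf_eq, Set.mem_pi, Set.mem_univ,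
        Set.mem_Iio, true_implies, hedef, MeasurableEquiv.piEquivPiSubtypeProd,
        MeasurableEquiv.symm, MeasurableEquiv.coe_mk, Equiv.symm, Equiv.piEquivPiSubtypeProd,
        Equiv.coe_fn_mk]
      constructor
      · intro h jp
        have := h jp.1 jp.2
        rw [dif_neg jp.2, dif_pos rfl] at this
        linarith
      · intro h j hj
        rw [dif_neg hj, dif_pos rfl]
        have := h ⟨j, hj⟩
        linarith
    rw [hset, Measure.pi_pi]
    have : ∀ jp : {j // ¬ p j}, gumbelMeasure (Set.Iio (u i + a ⟨i, rfl⟩ - u jp.1))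
        = ENNReal.ofReal (Real.exp (-(Real.exp (u jp.1 - u i) * Real.exp (-(a ⟨i, rfl⟩))))) := by
      intro jp
      rw [gumbel_cdf_Iio]
      congr 3
      rw [← Real.exp_add]
      congr 1
      ring
    simp_rw [this]
    rw [← ENNReal.ofReal_prod_of_nonneg (fun _ _ => (Real.exp_pos _).le)]
    congr 1
    rw [← Real.exp_sum]
    congr 1
    rw [hcdef, Finset.sum_mul]
    simp
  simp_rw [hslice]
  -- reduce the outer pi over a unique type to gumbelMeasure
  have hq : Measurable (fun t : ℝ => ENNReal.ofReal (Real.exp (-(c * Real.exp (-t))))) := by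
    exact Measurable.ennreal_ofReal (by fun_prop)
  have houter : ∫⁻ a : {j // p j} → ℝ,
        ENNReal.ofReal (Real.exp (-(c * Real.exp (-(a ⟨i, rfl⟩)))))
        ∂(Measure.pi fun _ : {j // p j} => gumbelMeasure)
      = ∫⁻ t, ENNReal.ofReal (Real.exp (-(c * Real.exp (-t)))) ∂gumbelMeasure := by
    haveI : Unique {j // p j} := ⟨⟨⟨i, rfl⟩⟩, fun a => Subtype.ext a.2⟩
    have h := (MeasureTheory.measurePreserving_funUnique gumbelMeasure {j // p j}).lintegral_comp hq
    convert h using 2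
    · congr <;> exact Subsingleton.elim _ _
    · funext a
      have ha : a ⟨i, rfl⟩ = a default := congrArg a (Subsingleton.elim _ _)
      rw [ha]
      rfl
  have hfinal : ∫⁻ t, ENNReal.ofReal (Real.exp (-(c * Real.exp (-t)))) ∂gumbelMeasure
      = ENNReal.ofReal (1 / S) := by
    rw [gumbelMeasure_eq, lintegral_withDensity_eq_lintegral_mul _
      (gumbelPDF_continuous.measurable.ennreal_ofReal) hq]
    have hpt : ∀ t : ℝ, (ENNReal.ofReal (gumbelPDF t) * ENNReal.ofReal (Real.exp (-(c * Real.exp (-t)))))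
        = ENNReal.ofReal (Real.exp (-t) * Real.exp (-(S * Real.exp (-t)))) := by
      intro t
      rw [← ENNReal.ofReal_mul (gumbelPDF_nonneg t)]
      congr 1
      show Real.exp (-t) * Real.exp (-Real.exp (-t)) * Real.exp (-(c * Real.exp (-t))) = _
      rw [mul_assoc, ← Real.exp_add]
      congr 2
      rw [hSdef]; ring
    simp only [Pi.mul_apply]
    simp_rw [hpt]
    rw [← ofReal_integral_eq_lintegral_ofReal (gumbel_integrable S hSpos)
      (Filter.Eventually.of_forall (fun t => by positivity))]
    rw [gumbel_integral S hSpos]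
  have final : (∫⁻ a : {j // p j} → ℝ,
        ENNReal.ofReal (Real.exp (-(c * Real.exp (-(a ⟨i, rfl⟩)))))
        ∂(Measure.pi fun _ : {j // p j} => gumbelMeasure)).toReal
      = Real.exp (u i) / ∑ j, Real.exp (u j) := by
    rw [houter.trans hfinal, ENNReal.toReal_ofReal (by positivity)]
    have hsum : S = (∑ j, Real.exp (u j)) / Real.exp (u i) := by
      have h1 : c = ∑ j ∈ Finset.univ.erase i, Real.exp (u j - u i) := by
        rw [hcdef]
        exact (Finset.sum_subtype (Finset.univ.erase i)
          (fun j => by simp [hpdef, Finset.mem_erase]) (fun j => Real.exp (u j - u i))).symm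
      have h2 : S = ∑ j, Real.exp (u j - u i) := by
        rw [hSdef, h1, add_comm, ← Real.exp_zero, ← sub_self (u i)]
        exact Finset.add_sum_erase Finset.univ (fun j => Real.exp (u j - u i))
          (Finset.mem_univ i)
      rw [h2, Finset.sum_div]
      refine Finset.sum_congr rfl (fun j _ => ?_)
      rw [Real.exp_sub]
    rw [hsum]
    rw [one_div_div]
  convert final using 3
  congr <;> exact Subsingleton.elim _ _
end
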